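/- arXiv:2105.06520 — 3 statements merged into one kernel-verified Lean document; each statement's English description precedes it below -/
import Mathlib

section
/- Let θ ∈ S^{N-1} be a unit vector in R^N, with N ≥ 2. There exists a constant C > 0 (depending only on N) such that for every s > 2 and every r > 0, the (N-1)-dimensional surface measure of the set { ξ ∈ S^{N-1} : |sξ + rθ| < 1 } is at most C / s^{N-1}. -/
/-! Since `s > 2` and `r > 0`, a point `ξ` of the cap satisfies `|s - r| < 1` and hence
`‖ξ + θ‖ < 2/s =: δ`. The surface measure of the cap is `N` times the volume of the cone
`(0,1) • cap`, and every point `tξ` of that cone lies within `2δ` of the point `-kδθ` with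
`k = ⌊t/δ⌋`. So the cone is covered by `⌊s/2⌋ + 1 ≤ s` balls of radius `4/s`, whose total volume
is `O(s · s^{-N})`. -/

open MeasureTheory Metric

/-- The standard surface measure on the unit sphere of `ℝ^N`. -/
noncomputable def sphereMeasure (N : ℕ) :
    Measure (sphere (0 : EuclideanSpace ℝ (Fin N)) 1) :=
  (volume : Measure (EuclideanSpace ℝ (Fin N))).toSphere

open Set Module
open scoped Pointwise

lemma abs_sub_natFloor_div_mul_lt {t δ : ℝ} (ht : 0 ≤ t) (hδ : 0 < δ) :
    |t - ⌊t / δ⌋₊ * δ| < δ := by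
  have hle : (⌊t / δ⌋₊ : ℝ) * δ ≤ t := (le_div_iff₀ hδ).1 (Nat.floor_le (by positivity))
  have hlt : t < (⌊t / δ⌋₊ + 1) * δ := (div_lt_iff₀ hδ).1 (Nat.lt_floor_add_one _)
  rw [abs_sub_lt_iff]
  constructor <;> linarith

lemma natFloor_half_add_one_mul_pow_le {s : ℝ} (hs : 2 ≤ s) {n : ℕ} (hn : 1 ≤ n) :
    (⌊s / 2⌋₊ + 1) * (4 / s) ^ n ≤ 4 ^ n / s ^ (n - 1) := by
  have hs0 : 0 < s := by linarith
  have hfloor : (⌊s / 2⌋₊ : ℝ) + 1 ≤ s := by linarith [Nat.floor_le (by positivity : 0 ≤ s / 2)]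
  calc (⌊s / 2⌋₊ + 1) * (4 / s) ^ n ≤ s * (4 / s) ^ n := by gcongr
    _ = 4 ^ n / s ^ (n - 1) := by
      obtain ⟨m, rfl⟩ := Nat.exists_eq_add_of_le' hn
      rw [Nat.add_sub_cancel, div_pow]
      field_simp
      ring

section NormedSpace

variable {E : Type*} [NormedAddCommGroup E] [NormedSpace ℝ E]

lemma norm_add_lt_of_norm_smul_add_smul_lt {ξ θ : E} (hξ : ‖ξ‖ = 1) (hθ : ‖θ‖ = 1) {s r : ℝ}
    (hs : 0 < s) (hr : 0 ≤ r) (h : ‖s • ξ + r • θ‖ < 1) : ‖ξ + θ‖ < 2 / s := by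
  have hsr : |s - r| < 1 := by
    have := abs_norm_sub_norm_le (s • ξ) (-(r • θ))
    rw [norm_neg, sub_neg_eq_add, norm_smul, norm_smul, hξ, hθ, Real.norm_of_nonneg hs.le,
      Real.norm_of_nonneg hr, mul_one, mul_one] at this
    exact this.trans_lt h
  rw [lt_div_iff₀ hs, mul_comm, ← Real.norm_of_nonneg hs.le, ← norm_smul]
  calc ‖s • (ξ + θ)‖ = ‖(s • ξ + r • θ) + (s - r) • θ‖ := by congr 1; module
    _ ≤ ‖s • ξ + r • θ‖ + ‖(s - r) • θ‖ := norm_add_le _ _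
    _ = ‖s • ξ + r • θ‖ + |s - r| := by rw [norm_smul, hθ, mul_one, Real.norm_eq_abs]
    _ < 2 := by linarith

lemma Ioo_smul_subset_biUnion_ball {θ : E} (hθ : ‖θ‖ ≤ 1) {δ : ℝ} (hδ : 0 < δ) :
    Ioo (0 : ℝ) 1 • {ξ : E | ‖ξ + θ‖ < δ} ⊆
      ⋃ k ∈ Finset.range (⌊δ⁻¹⌋₊ + 1), ball ((-(k * δ)) • θ) (2 * δ) := by
  rintro _ ⟨t, ⟨ht0, ht1⟩, ξ, hξ, rfl⟩
  have hk : ⌊t / δ⌋₊ ≤ ⌊δ⁻¹⌋₊ :=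
    Nat.floor_le_floor (by rw [div_eq_mul_inv]; nlinarith [inv_pos.2 hδ])
  refine mem_iUnion₂.2 ⟨⌊t / δ⌋₊, Finset.mem_range.2 (Nat.lt_succ_of_le hk), ?_⟩
  rw [mem_ball, dist_eq_norm]
  calc ‖t • ξ - (-(⌊t / δ⌋₊ * δ)) • θ‖ = ‖t • (ξ + θ) + (⌊t / δ⌋₊ * δ - t) • θ‖ := by
        congr 1; module
    _ ≤ t * ‖ξ + θ‖ + |t - ⌊t / δ⌋₊ * δ| * ‖θ‖ := by
        grw [norm_add_le, norm_smul, norm_smul, Real.norm_of_nonneg ht0.le, Real.norm_eq_abs,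
          abs_sub_comm]
    _ < δ + δ := by
        refine add_lt_add_of_lt_of_le ?_ ?_
        · exact (mul_le_of_le_one_left (norm_nonneg _) ht1.le).trans_lt hξ
        · exact (mul_le_of_le_one_right (abs_nonneg _) hθ).trans
            (abs_sub_natFloor_div_mul_lt ht0.le hδ).le
    _ = 2 * δ := by ring

variable [MeasurableSpace E] [BorelSpace E] [FiniteDimensional ℝ E] (μ : Measure E)
  [μ.IsAddHaarMeasure]

lemma addHaar_Ioo_smul_le {θ : E} (hθ : ‖θ‖ ≤ 1) {δ : ℝ} (hδ : 0 < δ) :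
    μ (Ioo (0 : ℝ) 1 • {ξ : E | ‖ξ + θ‖ < δ}) ≤
      (⌊δ⁻¹⌋₊ + 1 : ℕ) * (ENNReal.ofReal ((2 * δ) ^ finrank ℝ E) * μ (ball 0 1)) := by
  calc μ (Ioo (0 : ℝ) 1 • {ξ : E | ‖ξ + θ‖ < δ})
      ≤ ∑ k ∈ Finset.range (⌊δ⁻¹⌋₊ + 1), μ (ball ((-(k * δ)) • θ) (2 * δ)) :=
        (measure_mono (Ioo_smul_subset_biUnion_ball hθ hδ)).trans (measure_biUnion_finset_le _ _)
    _ = _ := by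
        simp only [μ.addHaar_ball_of_pos _ (by positivity : 0 < 2 * δ), Finset.sum_const,
          Finset.card_range, nsmul_eq_mul]

theorem MeasureTheory.Measure.toSphere_cap_le [Nontrivial E] {θ : E} (hθ : ‖θ‖ = 1) {s r : ℝ}
    (hs : 2 ≤ s) (hr : 0 ≤ r) :
    μ.toSphere {ξ : sphere (0 : E) 1 | ‖s • (ξ : E) + r • θ‖ < 1} ≤
      ENNReal.ofReal
        (finrank ℝ E * 4 ^ finrank ℝ E * μ.real (ball 0 1) / s ^ (finrank ℝ E - 1)) := by
  have hs0 : 0 < s := by linarith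
  have hmeas : MeasurableSet {ξ : sphere (0 : E) 1 | ‖s • (ξ : E) + r • θ‖ < 1} :=
    (isOpen_lt (by fun_prop) continuous_const).measurableSet
  have hcap : Subtype.val '' {ξ : sphere (0 : E) 1 | ‖s • (ξ : E) + r • θ‖ < 1} ⊆
      {ξ : E | ‖ξ + θ‖ < 2 / s} := by
    rintro _ ⟨ξ, hξ, rfl⟩
    exact norm_add_lt_of_norm_smul_add_smul_lt (norm_eq_of_mem_sphere ξ) hθ hs0 hr hξ
  have hfloor : ⌊(2 / s)⁻¹⌋₊ = ⌊s / 2⌋₊ := by rw [inv_div]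
  rw [μ.toSphere_apply' hmeas]
  grw [hcap, addHaar_Ioo_smul_le μ hθ.le (by positivity : 0 < 2 / s), hfloor,
    ← ofReal_measureReal]
  rw [show 2 * (2 / s) = 4 / s by ring, ← ENNReal.ofReal_natCast, ← ENNReal.ofReal_natCast,
    ← ENNReal.ofReal_mul (by positivity), ← ENNReal.ofReal_mul (by positivity),
    ← ENNReal.ofReal_mul (by positivity)]
  refine ENNReal.ofReal_le_ofReal ?_
  push_cast
  calc (finrank ℝ E : ℝ) * ((⌊s / 2⌋₊ + 1) * ((4 / s) ^ finrank ℝ E * μ.real (ball 0 1)))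
      = finrank ℝ E * ((⌊s / 2⌋₊ + 1) * (4 / s) ^ finrank ℝ E * μ.real (ball 0 1)) := by ring
    _ ≤ finrank ℝ E * (4 ^ finrank ℝ E / s ^ (finrank ℝ E - 1) * μ.real (ball 0 1)) := by
        gcongr
        exact natFloor_half_add_one_mul_pow_le hs finrank_pos
    _ = _ := by ring

end NormedSpace

theorem sphere_cap_measure_bound {N : ℕ} (hN : 2 ≤ N)
    (θ : sphere (0 : EuclideanSpace ℝ (Fin N)) 1) :
    ∃ C > 0, ∀ s : ℝ, 2 < s → ∀ r : ℝ, 0 < r →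
      sphereMeasure N {ξ : sphere (0 : EuclideanSpace ℝ (Fin N)) 1 |
          ‖s • (ξ : EuclideanSpace ℝ (Fin N)) + r • (θ : EuclideanSpace ℝ (Fin N))‖ < 1}
        ≤ ENNReal.ofReal (C / s ^ (N - 1)) := by
  have : NeZero N := ⟨by omega⟩
  have hball : 0 < volume.real (ball (0 : EuclideanSpace ℝ (Fin N)) 1) :=
    ENNReal.toReal_pos (measure_ball_pos _ _ one_pos).ne' measure_ball_lt_top.ne
  refine ⟨N * 4 ^ N * volume.real (ball (0 : EuclideanSpace ℝ (Fin N)) 1), by positivity,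
    fun s hs r hr => ?_⟩
  simpa only [sphereMeasure, finrank_euclideanSpace_fin] using
    volume.toSphere_cap_le (norm_eq_of_mem_sphere θ) hs.le hr.le
end

section
/- Let μ be a finite nonnegative measure on S^{N-1}, N ≥ 2, 0 < α < 2. There exists a constant C > 0 such that for every s > 2: ∫_{S^{N-1}} ( ∫_{s/2}^{2s} ∫_{S^{N-1}} 1_{{|sξ + rθ| < 1}}(θ) dμ(θ) dr/r^{1+α} )^{N/α} dξ ≤ C / s^{2N-1}. -/
/-!
Let `p = N / α ≥ 1` and let `I(ξ)` be the inner integral. The weight `r ^ (-1 - α)` integrates over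
`(s/2, 2s)` to `≲ s ^ (-α)`, so `I ≤ A ≲ μ(S) s ^ (-α)` and `∫ I ^ p ≤ A ^ (p - 1) ∫ I`. By Tonelli,
`∫ I dξ ≤ sup_{r, θ} σ {ξ : ‖s ξ + r θ‖ < 1} · μ(S) ∫ r ^ (-1 - α) dr`, and that set is a spherical
cap of radius `1/s`. A cap of radius `ρ ≤ 1` has measure `≲ ρ ^ (N - 1)`: the cone `K` over it lies
in `(1 - ρ) K ∪ B(x, 2ρ)`, so `(1 - (1 - ρ) ^ N) |K| ≤ |B(x, 2ρ)|`, and `1 - (1 - ρ) ^ N ≥ ρ`.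
Altogether `∫ I ^ p ≲ s ^ (-N) · s ^ (1 - N)`.
-/

open MeasureTheory Metric ENNReal

open Set Function
open scoped Pointwise

section Lintegral

variable {X Y : Type*} [MeasurableSpace X] [MeasurableSpace Y]

lemma lintegral_rpow_le_rpow_mul {μ : Measure X} {f : X → ℝ≥0∞} {A B : ℝ≥0∞} (hA : A ≠ ∞)
    (hf : ∀ x, f x ≤ A) (hint : ∫⁻ x, f x ∂μ ≤ A * B) {p : ℝ} (hp : 1 ≤ p) :
    ∫⁻ x, f x ^ p ∂μ ≤ A ^ p * B := by
  have hsplit (a : ℝ≥0∞) : a ^ p = a ^ (p - 1) * a :=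
    calc a ^ p = a ^ ((p - 1) + 1) := by rw [sub_add_cancel]
      _ = a ^ (p - 1) * a := by
        rw [ENNReal.rpow_add_of_nonneg _ _ (by linarith) zero_le_one, ENNReal.rpow_one]
  calc ∫⁻ x, f x ^ p ∂μ ≤ ∫⁻ x, A ^ (p - 1) * f x ∂μ := lintegral_mono fun x => by
        rw [hsplit]; gcongr; exact hf x
    _ = A ^ (p - 1) * ∫⁻ x, f x ∂μ :=
        lintegral_const_mul' _ _ (ENNReal.rpow_ne_top_of_nonneg (by linarith) hA)
    _ ≤ A ^ (p - 1) * (A * B) := by gcongr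
    _ = A ^ p * B := by rw [hsplit A, mul_assoc]

lemma lintegral_measure_setOf_le {μ : Measure X} {ν : Measure Y} [SFinite μ] [SFinite ν]
    {P : X → Y → Prop} (hP : MeasurableSet {q : X × Y | P q.1 q.2}) {c : ℝ≥0∞}
    (hc : ∀ y, μ {x | P x y} ≤ c) :
    ∫⁻ x, ν {y | P x y} ∂μ ≤ c * ν univ :=
  calc ∫⁻ x, ν {y | P x y} ∂μ = μ.prod ν {q | P q.1 q.2} := (Measure.prod_apply hP).symm
    _ = ∫⁻ y, μ {x | P x y} ∂ν := Measure.prod_apply_symm hP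
    _ ≤ ∫⁻ _, c ∂ν := lintegral_mono hc
    _ = c * ν univ := lintegral_const c

lemma lintegral_setLIntegral_mul_le {μ : Measure X} {ν : Measure Y} [SFinite μ] [SFinite ν]
    {f : X → Y → ℝ≥0∞} (hf : Measurable (uncurry f)) {w : Y → ℝ≥0∞} (hw : Measurable w)
    {S : Set Y} {B : ℝ≥0∞} (hB : ∀ y ∈ S, ∫⁻ x, f x y ∂μ ≤ B) :
    ∫⁻ x, ∫⁻ y in S, f x y * w y ∂ν ∂μ ≤ B * ∫⁻ y in S, w y ∂ν :=
  calc ∫⁻ x, ∫⁻ y in S, f x y * w y ∂ν ∂μ = ∫⁻ y in S, ∫⁻ x, f x y * w y ∂μ ∂ν :=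
        lintegral_lintegral_swap (hf.mul (hw.comp measurable_snd)).aemeasurable
    _ = ∫⁻ y in S, (∫⁻ x, f x y ∂μ) * w y ∂ν :=
        lintegral_congr fun y => lintegral_mul_const _ hf.of_uncurry_right
    _ ≤ ∫⁻ y in S, B * w y ∂ν := setLIntegral_mono (hw.const_mul B) fun y hy => by
        gcongr; exact hB y hy
    _ = B * ∫⁻ y in S, w y ∂ν := lintegral_const_mul B hw

end Lintegral

lemma setLIntegral_Ioo_ofReal_rpow_le {a b γ : ℝ} (ha : 0 < a) (hγ : γ ≤ 0) :
    ∫⁻ r in Ioo a b, ENNReal.ofReal (r ^ γ) ≤ ENNReal.ofReal (a ^ γ * (b - a)) :=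
  calc ∫⁻ r in Ioo a b, ENNReal.ofReal (r ^ γ) ≤ ∫⁻ _ in Ioo a b, ENNReal.ofReal (a ^ γ) :=
        setLIntegral_mono measurable_const fun r hr =>
          ENNReal.ofReal_le_ofReal (Real.rpow_le_rpow_of_nonpos ha hr.1.le hγ)
    _ = ENNReal.ofReal (a ^ γ * (b - a)) := by
        rw [setLIntegral_const, Real.volume_Ioo, ENNReal.ofReal_mul (by positivity)]

lemma rpow_scaling_eq {N : ℕ} (hN : 1 ≤ N) {α s M κ : ℝ} (hα : 0 < α) (hs : 0 < s)
    (hM : 0 ≤ M) :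
    (M * ((s / 2) ^ (-1 - α) * (2 * s - s / 2))) ^ ((N : ℝ) / α) * (κ * s⁻¹ ^ (N - 1))
      = (3 * M) ^ ((N : ℝ) / α) * 2 ^ N * κ / s ^ (2 * N - 1) := by
  have hs2 : 0 < s / 2 := by positivity
  have hweight : (s / 2) ^ (-1 - α) * (2 * s - s / 2) = 3 * (s / 2) ^ (-α) := by
    rw [show -1 - α = -α - 1 by ring, Real.rpow_sub_one hs2.ne']
    field_simp
    ring
  have hpow : ((s / 2) ^ (-α)) ^ ((N : ℝ) / α) = 2 ^ N / s ^ N := by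
    rw [← Real.rpow_mul hs2.le, show -α * ((N : ℝ) / α) = -N by field_simp, Real.rpow_neg hs2.le,
      Real.rpow_natCast, div_pow, inv_div]
  have hexp : s ^ (2 * N - 1) = s ^ N * s ^ (N - 1) := by rw [← pow_add]; congr 1; omega
  rw [hweight, show M * (3 * (s / 2) ^ (-α)) = 3 * M * (s / 2) ^ (-α) by ring,
    Real.mul_rpow (by positivity) (by positivity), hpow, hexp, inv_pow]
  field_simp

section SphereCaps

variable {E : Type*} [NormedAddCommGroup E] [NormedSpace ℝ E]

local notation "dim" => Module.finrank ℝ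

lemma Ioo_smul_subset_smul_Ioo_smul_union_ball {A : Set E} (hA : A ⊆ sphere 0 1) {x : E}
    {ρ : ℝ} (hAx : A ⊆ ball x ρ) :
    Ioo (0 : ℝ) 1 • A ⊆ (1 - ρ) • (Ioo (0 : ℝ) 1 • A) ∪ ball x (2 * ρ) := by
  rintro _ ⟨t, ⟨ht0, ht1⟩, ξ, hξ, rfl⟩
  by_cases ht : t < 1 - ρ
  · refine Or.inl ⟨(t / (1 - ρ)) • ξ, smul_mem_smul ⟨div_pos ht0 (by linarith), ?_⟩ hξ, ?_⟩
    · rwa [div_lt_one (by linarith)]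
    · simp only [smul_smul, mul_div_cancel₀ _ (by linarith : 1 - ρ ≠ 0)]
  · have hξ1 : ‖ξ‖ = 1 := by simpa using hA hξ
    have hshrink : dist (t • ξ) ξ = 1 - t := by
      rw [dist_eq_norm, show t • ξ - ξ = (t - 1) • ξ by rw [sub_smul, one_smul], norm_smul, hξ1,
        mul_one, Real.norm_eq_abs, abs_of_neg (by linarith), neg_sub]
    refine Or.inr (mem_ball.2 ?_)
    calc dist (t • ξ) x ≤ dist (t • ξ) ξ + dist ξ x := dist_triangle _ _ _
      _ < ρ + ρ := add_lt_add_of_le_of_lt (by linarith) (hAx hξ)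
      _ = 2 * ρ := by ring

variable [MeasurableSpace E] [BorelSpace E] [FiniteDimensional ℝ E]

lemma MeasureTheory.Measure.toSphere_preimage_ball_le (μ : Measure E) [μ.IsAddHaarMeasure]
    (x : E) {ρ : ℝ} (hρ0 : 0 < ρ) (hρ1 : ρ ≤ 1) :
    μ.toSphere (Subtype.val ⁻¹' ball x ρ)
      ≤ ENNReal.ofReal (dim E * 2 ^ dim E * μ.real (ball 0 1) * ρ ^ (dim E - 1)) := by
  rw [μ.toSphere_apply' (measurableSet_ball.preimage measurable_subtype_coe)]
  set d := dim E
  set A : Set E := Subtype.val '' (Subtype.val ⁻¹' ball x ρ : Set (sphere (0 : E) 1))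
  have hA : A ⊆ sphere 0 1 := Subtype.coe_image_subset _ _
  have hAx : A ⊆ ball x ρ := by rintro _ ⟨ξ, hξ, rfl⟩; exact hξ
  have hcone : Ioo (0 : ℝ) 1 • A ⊆ ball 0 1 :=
    calc Ioo (0 : ℝ) 1 • A ⊆ Ioo (0 : ℝ) 1 • sphere 0 1 := smul_subset_smul_left hA
      _ ⊆ ball 0 1 := by rw [Ioo_smul_sphere_zero le_rfl one_pos, mul_one]; exact sdiff_subset
  have hfin : μ (Ioo (0 : ℝ) 1 • A) ≠ ∞ := measure_ne_top_of_subset hcone measure_ball_lt_top.ne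
  have hcover : μ.real (Ioo (0 : ℝ) 1 • A)
      ≤ (1 - ρ) ^ d * μ.real (Ioo (0 : ℝ) 1 • A) + (2 * ρ) ^ d * μ.real (ball 0 1) := by
    have := (measure_mono (Ioo_smul_subset_smul_Ioo_smul_union_ball hA hAx)).trans
      (measure_union_le (μ := μ) _ _)
    rw [μ.addHaar_smul_of_nonneg (by linarith), μ.addHaar_ball_of_pos _ (by linarith)] at this
    have := ENNReal.toReal_mono (by finiteness) this
    rwa [ENNReal.toReal_add (by finiteness) (by finiteness), ENNReal.toReal_mul,
      ENNReal.toReal_mul, ENNReal.toReal_ofReal (by bound), ENNReal.toReal_ofReal (by positivity),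
      ← measureReal_def, ← measureReal_def] at this
  rcases Nat.eq_zero_or_pos d with hd | hd
  · rw [hd, Nat.cast_zero, zero_mul]
    exact zero_le
  have hshell : ρ ≤ 1 - (1 - ρ) ^ d := by
    linarith [pow_le_of_le_one (by linarith : 0 ≤ 1 - ρ) (by linarith) hd.ne']
  have hρd : ρ ^ d = ρ * ρ ^ (d - 1) := by rw [← pow_succ', Nat.sub_add_cancel hd]
  have hcone_le : μ.real (Ioo (0 : ℝ) 1 • A) ≤ 2 ^ d * μ.real (ball 0 1) * ρ ^ (d - 1) := by
    refine le_of_mul_le_mul_left ?_ hρ0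
    rw [mul_pow, hρd] at hcover
    nlinarith [measureReal_nonneg (μ := μ) (s := Ioo (0 : ℝ) 1 • A)]
  calc (d : ℝ≥0∞) * μ (Ioo (0 : ℝ) 1 • A)
        = ENNReal.ofReal (d * μ.real (Ioo (0 : ℝ) 1 • A)) := by
        rw [ENNReal.ofReal_mul (by positivity), ENNReal.ofReal_natCast, measureReal_def,
          ENNReal.ofReal_toReal hfin]
    _ ≤ _ := ENNReal.ofReal_le_ofReal <| by
        nlinarith [mul_le_mul_of_nonneg_left hcone_le (Nat.cast_nonneg d : (0 : ℝ) ≤ d)]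

lemma MeasureTheory.Measure.toSphere_setOf_norm_smul_add_lt_one_le (μ : Measure E)
    [μ.IsAddHaarMeasure] {s : ℝ} (hs : 1 ≤ s) (v : E) :
    μ.toSphere {ξ | ‖s • (ξ : E) + v‖ < 1}
      ≤ ENNReal.ofReal (dim E * 2 ^ dim E * μ.real (ball 0 1) * s⁻¹ ^ (dim E - 1)) := by
  have hs0 : 0 < s := by linarith
  have hset : {ξ : sphere (0 : E) 1 | ‖s • (ξ : E) + v‖ < 1}
      = Subtype.val ⁻¹' ball (-(s⁻¹ • v)) s⁻¹ := by
    ext ξ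
    rw [mem_ofPred_eq, mem_preimage, mem_ball, dist_eq_norm, sub_neg_eq_add,
      show s • (ξ : E) + v = s • ((ξ : E) + s⁻¹ • v) by rw [smul_add, smul_inv_smul₀ hs0.ne'],
      norm_smul, Real.norm_of_nonneg hs0.le, ← one_div, lt_div_iff₀' hs0]
  rw [hset]
  exact μ.toSphere_preimage_ball_le _ (inv_pos.2 hs0) (inv_le_one_of_one_le₀ hs)

lemma measurable_measure_setOf_norm_smul_add_lt_one (μ : Measure (sphere (0 : E) 1)) [SFinite μ]
    (s : ℝ) :
    Measurable (uncurry fun (ξ : sphere (0 : E) 1) (r : ℝ) =>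
      μ {θ : sphere (0 : E) 1 | ‖s • (ξ : E) + r • (θ : E)‖ < 1}) :=
  measurable_measure_prodMk_left (s := {q : (sphere (0 : E) 1 × ℝ) × sphere (0 : E) 1 |
    ‖s • (q.1.1 : E) + q.1.2 • (q.2 : E)‖ < 1})
    (isOpen_lt (by fun_prop) continuous_const).measurableSet

lemma MeasureTheory.Measure.lintegral_toSphere_measure_setOf_le (ν : Measure E)
    [ν.IsAddHaarMeasure] (μ : Measure (sphere (0 : E) 1)) [SFinite μ] {s : ℝ} (hs : 1 ≤ s)
    (r : ℝ) :
    ∫⁻ ξ, μ {θ : sphere (0 : E) 1 | ‖s • (ξ : E) + r • (θ : E)‖ < 1} ∂ν.toSphere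
      ≤ ENNReal.ofReal (dim E * 2 ^ dim E * ν.real (ball 0 1) * s⁻¹ ^ (dim E - 1)) * μ univ :=
  lintegral_measure_setOf_le (isOpen_lt (by fun_prop) continuous_const).measurableSet
    fun _ => ν.toSphere_setOf_norm_smul_add_lt_one_le hs _

end SphereCaps

instance (N : ℕ) : IsFiniteMeasure (sphereMeasure N) := by
  unfold sphereMeasure; infer_instance

lemma anisotropic_geometric_estimate_explicit {N : ℕ} {α : ℝ} (hα0 : 0 < α) (hαN : α ≤ N)
    (μ : Measure (sphere (0 : EuclideanSpace ℝ (Fin N)) 1)) [IsFiniteMeasure μ] {M : ℝ}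
    (hM : μ.real univ ≤ M) {s : ℝ} (hs : 1 ≤ s) :
    ∫⁻ ξ : sphere (0 : EuclideanSpace ℝ (Fin N)) 1,
        ((∫⁻ r in Ioo (s / 2) (2 * s),
            (μ {θ : sphere (0 : EuclideanSpace ℝ (Fin N)) 1 |
                ‖s • (ξ : EuclideanSpace ℝ (Fin N)) + r • (θ : EuclideanSpace ℝ (Fin N))‖ < 1})
              * ENNReal.ofReal (r ^ (-1 - α))) ^ (N / α : ℝ)) ∂(sphereMeasure N)
      ≤ ENNReal.ofReal ((3 * M) ^ (N / α : ℝ) * 2 ^ N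
          * (N * 2 ^ N * volume.real (ball (0 : EuclideanSpace ℝ (Fin N)) 1))
          / s ^ (2 * N - 1)) := by
  set κ : ℝ := N * 2 ^ N * volume.real (ball (0 : EuclideanSpace ℝ (Fin N)) 1)
  have hN : 0 < N := by exact_mod_cast hα0.trans_le hαN
  have hp : 1 ≤ (N / α : ℝ) := by rwa [le_div_iff₀ hα0, one_mul]
  have hw : Measurable fun r : ℝ => ENNReal.ofReal (r ^ (-1 - α)) := by fun_prop
  have hweight : μ univ * ∫⁻ r in Ioo (s / 2) (2 * s), ENNReal.ofReal (r ^ (-1 - α))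
      ≤ ENNReal.ofReal M * ENNReal.ofReal ((s / 2) ^ (-1 - α) * (2 * s - s / 2)) :=
    mul_le_mul' (by rw [← ofReal_measureReal]; exact ENNReal.ofReal_le_ofReal hM)
      (setLIntegral_Ioo_ofReal_rpow_le (by linarith) (by linarith))
  have hcap (r : ℝ) : ∫⁻ ξ, μ {θ : sphere (0 : EuclideanSpace ℝ (Fin N)) 1 |
      ‖s • (ξ : EuclideanSpace ℝ (Fin N)) + r • (θ : EuclideanSpace ℝ (Fin N))‖ < 1}
      ∂(sphereMeasure N) ≤ ENNReal.ofReal (κ * s⁻¹ ^ (N - 1)) * μ univ := by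
    simpa only [sphereMeasure, finrank_euclideanSpace_fin] using
      volume.lintegral_toSphere_measure_setOf_le μ hs r
  refine (lintegral_rpow_le_rpow_mul
    (A := ENNReal.ofReal M * ENNReal.ofReal ((s / 2) ^ (-1 - α) * (2 * s - s / 2)))
    (B := ENNReal.ofReal (κ * s⁻¹ ^ (N - 1))) (by finiteness) (fun ξ => ?_) ?_ hp).trans_eq ?_
  · exact (lintegral_mono fun r => by gcongr; exact subset_univ _).trans
      ((lintegral_const_mul _ hw).trans_le hweight)
  · refine (lintegral_setLIntegral_mul_le (measurable_measure_setOf_norm_smul_add_lt_one μ s) hw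
      fun r _ => hcap r).trans ?_
    rw [mul_assoc, mul_comm]
    gcongr
  · have hM0 : 0 ≤ M := measureReal_nonneg.trans hM
    have hw0 : 0 ≤ (s / 2) ^ (-1 - α) * (2 * s - s / 2) := mul_nonneg (by positivity) (by linarith)
    rw [← ENNReal.ofReal_mul hM0,
      ENNReal.ofReal_rpow_of_nonneg (by positivity) (by positivity),
      ← ENNReal.ofReal_mul (by positivity), rpow_scaling_eq hN hα0 (by linarith) hM0]

theorem anisotropic_geometric_estimate {N : ℕ} (hN : 2 ≤ N) (α : ℝ)
    (hα0 : 0 < α) (hα2 : α < 2)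
    (μ : Measure (sphere (0 : EuclideanSpace ℝ (Fin N)) 1)) [IsFiniteMeasure μ] :
    ∃ C > 0, ∀ s : ℝ, 2 < s →
      ∫⁻ ξ : sphere (0 : EuclideanSpace ℝ (Fin N)) 1,
          ((∫⁻ r in Set.Ioo (s / 2) (2 * s),
              (μ {θ : sphere (0 : EuclideanSpace ℝ (Fin N)) 1 |
                  ‖s • (ξ : EuclideanSpace ℝ (Fin N)) + r • (θ : EuclideanSpace ℝ (Fin N))‖ < 1})
                * ENNReal.ofReal (r ^ (-1 - α)) ∂volume) ^ (N / α : ℝ))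
        ∂(sphereMeasure N)
      ≤ ENNReal.ofReal (C / s ^ (2 * N - 1)) := by
  have hN0 : (0 : ℝ) < N := by exact_mod_cast (by omega : 0 < N)
  have hball : 0 < volume.real (ball (0 : EuclideanSpace ℝ (Fin N)) 1) :=
    ENNReal.toReal_pos (measure_ball_pos volume _ one_pos).ne' measure_ball_lt_top.ne
  refine ⟨(3 * (μ.real univ + 1)) ^ (N / α : ℝ) * 2 ^ N
    * (N * 2 ^ N * volume.real (ball (0 : EuclideanSpace ℝ (Fin N)) 1)), by positivity,
    fun s hs => ?_⟩
  have hαN : α ≤ N := by linarith [show (2 : ℝ) ≤ N by exact_mod_cast hN]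
  exact anisotropic_geometric_estimate_explicit hα0 hαN μ (by linarith) (by linarith)
end

section
/- Let u ∈ C²_c(R^N). Then D^ν u ∈ L²(R^N) with ‖D^ν u‖_2 ≤ C (‖u‖_2² + ‖∇u‖_2²)^{1/2}, where C depends only on N, α, μ(S^{N-1}), and the support of u. -/
open MeasureTheory Metric ENNReal

/-- The α-stable Lévy measure with spectral measure `μ` on the unit sphere:
`ν(dy) = dμ(θ) dr / r^{1+α}` in polar coordinates `y = r θ`. -/
noncomputable def stableMeasure {N : ℕ}
    (μ : Measure (sphere (0 : EuclideanSpace ℝ (Fin N)) 1)) (α : ℝ) :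
    Measure (EuclideanSpace ℝ (Fin N)) :=
  Measure.map (fun p : sphere (0 : EuclideanSpace ℝ (Fin N)) 1 × ℝ =>
      p.2 • (p.1 : EuclideanSpace ℝ (Fin N)))
    (μ.prod ((volume.restrict (Set.Ioi (0 : ℝ))).withDensity
      fun r => ENNReal.ofReal (r ^ (-1 - α))))

/-- The ν-gradient `D^ν u (x) = ((1/2) ∫ |u(x) - u(x-y)|² ν(dy))^{1/2}`. -/
noncomputable def Dnu {N : ℕ} (ν : Measure (EuclideanSpace ℝ (Fin N)))
    (u : EuclideanSpace ℝ (Fin N) → ℝ) (x : EuclideanSpace ℝ (Fin N)) : ℝ≥0∞ :=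
  (2⁻¹ * ∫⁻ y, (‖u x - u (x - y)‖₊ : ℝ≥0∞) ^ 2 ∂ν) ^ (1 / 2 : ℝ)

/-- The energy (Dirichlet form) `E(u,u) = ∫ |D^ν u|² dx`. -/
noncomputable def energy {N : ℕ} (ν : Measure (EuclideanSpace ℝ (Fin N)))
    (u : EuclideanSpace ℝ (Fin N) → ℝ) : ℝ≥0∞ :=
  ∫⁻ x, Dnu ν u x ^ 2

/-!
By Fubini and the translation invariance of Lebesgue measure,
`∫ |D^ν u|² = ½ ∫ ‖u(· + y) - u‖₂² ν(dy)`. The inner norm is at most `4 ‖u‖₂²` by the triangle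
inequality, and at most `|y|² ‖∇u‖₂²` by the fundamental theorem of calculus along `t ↦ x + t y`
and Jensen's inequality on `[0, 1]`. In polar coordinates `∫ min(a, |y|² b) ν(dy)` is then at most
`μ(S^{N-1}) (b ∫₀¹ r^{1-α} dr + a ∫₁^∞ r^{-1-α} dr)`, which is finite because `0 < α < 2`.
-/

open Set

section LpNorm

variable {X : Type*} [MeasurableSpace X] {ρ : Measure X}

lemma eLpNorm_two_sq_eq_lintegral {G : Type*} [NormedAddCommGroup G] (f : X → G) :
    eLpNorm f 2 ρ ^ 2 = ∫⁻ x, ‖f x‖ₑ ^ 2 ∂ρ := by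
  rw [eLpNorm_eq_lintegral_rpow_enorm_toReal two_ne_zero ofNat_ne_top,
    ← ENNReal.rpow_natCast, ← ENNReal.rpow_mul]
  norm_num

lemma eLpNorm_toReal_two_le (f : X → ℝ≥0∞) :
    eLpNorm (fun x => (f x).toReal) 2 ρ ≤ (∫⁻ x, f x ^ 2 ∂ρ) ^ (1 / 2 : ℝ) := by
  rw [eLpNorm_eq_lintegral_rpow_enorm_toReal two_ne_zero ofNat_ne_top]
  norm_num
  gcongr with x
  rw [Real.enorm_of_nonneg toReal_nonneg]
  exact ofReal_toReal_le

end LpNorm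

lemma sq_lintegral_le_lintegral_sq {X : Type*} [MeasurableSpace X] (P : Measure X)
    [IsProbabilityMeasure P] {g : X → ℝ≥0∞} (hg : AEMeasurable g P) :
    (∫⁻ t, g t ∂P) ^ 2 ≤ ∫⁻ t, g t ^ 2 ∂P := by
  have h := ENNReal.lintegral_mul_le_Lp_mul_Lq P Real.HolderConjugate.two_two hg
    (aemeasurable_const (b := (1 : ℝ≥0∞)))
  simp only [Pi.mul_apply, mul_one, ENNReal.one_rpow, lintegral_one, measure_univ] at h
  calc (∫⁻ t, g t ∂P) ^ 2 ≤ ((∫⁻ t, g t ^ (2:ℝ) ∂P) ^ (1/2:ℝ)) ^ 2 := by gcongr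
    _ = ∫⁻ t, g t ^ 2 ∂P := by
      rw [← ENNReal.rpow_natCast _ 2, ← ENNReal.rpow_mul]
      norm_num

section Translation

variable {E F : Type*} [NormedAddCommGroup E] [MeasurableSpace E] [BorelSpace E]
  [NormedAddCommGroup F] {ρ : Measure E} [ρ.IsAddRightInvariant]

lemma lintegral_enorm_sub_comp_add_sq_le_four_mul {u : E → F} (hu : Continuous u) (y : E) :
    ∫⁻ x, ‖u (x + y) - u x‖ₑ ^ 2 ∂ρ ≤ 4 * ∫⁻ x, ‖u x‖ₑ ^ 2 ∂ρ := by
  have hpt (x : E) : ‖u (x + y) - u x‖ₑ ^ 2 ≤ 2 * ‖u (x + y)‖ₑ ^ 2 + 2 * ‖u x‖ₑ ^ 2 := by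
    have := (pow_le_pow_left₀ zero_le (nnnorm_sub_le (u (x + y)) (u x)) 2).trans add_sq_le
    simp only [enorm_eq_nnnorm]
    exact_mod_cast this.trans_eq (mul_add _ _ _)
  calc ∫⁻ x, ‖u (x + y) - u x‖ₑ ^ 2 ∂ρ
      ≤ ∫⁻ x, (2 * ‖u (x + y)‖ₑ ^ 2 + 2 * ‖u x‖ₑ ^ 2) ∂ρ := lintegral_mono hpt
    _ = 2 * ∫⁻ x, ‖u (x + y)‖ₑ ^ 2 ∂ρ + 2 * ∫⁻ x, ‖u x‖ₑ ^ 2 ∂ρ := by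
      rw [lintegral_add_right _ ((hu.enorm.measurable.pow_const 2).const_mul 2),
        lintegral_const_mul' _ _ ofNat_ne_top, lintegral_const_mul' _ _ ofNat_ne_top]
    _ = 4 * ∫⁻ x, ‖u x‖ₑ ^ 2 ∂ρ := by
      rw [lintegral_add_right_eq_self (fun x => ‖u x‖ₑ ^ 2) y]
      ring

end Translation

section Gradient

variable {E F : Type*} [NormedAddCommGroup E] [NormedSpace ℝ E]
  [NormedAddCommGroup F] [NormedSpace ℝ F] [CompleteSpace F]

lemma enorm_sub_le_mul_lintegral_enorm_fderiv {u : E → F} (hu : ContDiff ℝ 1 u) (x y : E) :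
    ‖u (x + y) - u x‖ₑ ≤ ‖y‖ₑ * ∫⁻ t in Ioc (0:ℝ) 1, ‖fderiv ℝ u (x + t • y)‖ₑ := by
  have hcont : Continuous fun t : ℝ => fderiv ℝ u (x + t • y) :=
    (hu.continuous_fderiv one_ne_zero).comp (by fun_prop)
  have hderiv (t : ℝ) :
      HasDerivAt (fun s : ℝ => u (x + s • y)) (fderiv ℝ u (x + t • y) y) t := by
    have hline : HasDerivAt (fun s : ℝ => x + s • y) y t := by
      simpa using ((hasDerivAt_id t).smul_const y).const_add x
    exact ((hu.differentiable one_ne_zero) _).hasFDerivAt.comp_hasDerivAt t hline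
  have hftc : u (x + y) - u x = ∫ t in (0:ℝ)..1, fderiv ℝ u (x + t • y) y := by
    rw [intervalIntegral.integral_eq_sub_of_hasDerivAt (fun t _ => hderiv t)
      ((hcont.clm_apply continuous_const).intervalIntegrable 0 1)]
    simp
  calc ‖u (x + y) - u x‖ₑ
      ≤ ∫⁻ t in Ioc (0:ℝ) 1, ‖fderiv ℝ u (x + t • y) y‖ₑ := by
        rw [hftc, intervalIntegral.integral_of_le zero_le_one]
        exact enorm_integral_le_lintegral_enorm _
    _ ≤ ∫⁻ t in Ioc (0:ℝ) 1, ‖y‖ₑ * ‖fderiv ℝ u (x + t • y)‖ₑ := by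
        gcongr with t
        rw [mul_comm]
        exact ContinuousLinearMap.le_opENorm _ _
    _ = ‖y‖ₑ * ∫⁻ t in Ioc (0:ℝ) 1, ‖fderiv ℝ u (x + t • y)‖ₑ :=
        lintegral_const_mul' _ _ enorm_ne_top

variable [MeasurableSpace E] [BorelSpace E] {ρ : Measure E} [ρ.IsAddRightInvariant] [SFinite ρ]

lemma lintegral_enorm_sub_comp_add_sq_le_fderiv {u : E → F} (hu : ContDiff ℝ 1 u) (y : E) :
    ∫⁻ x, ‖u (x + y) - u x‖ₑ ^ 2 ∂ρ ≤ ‖y‖ₑ ^ 2 * ∫⁻ x, ‖fderiv ℝ u x‖ₑ ^ 2 ∂ρ := by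
  set P := volume.restrict (Ioc (0:ℝ) 1)
  have : IsProbabilityMeasure P := ⟨by simp [P]⟩
  have hmeas : Measurable fun p : E × ℝ => ‖fderiv ℝ u (p.1 + p.2 • y)‖ₑ ^ 2 :=
    (((hu.continuous_fderiv one_ne_zero).comp (by fun_prop)).enorm.measurable).pow_const 2
  have hpt (x : E) :
      ‖u (x + y) - u x‖ₑ ^ 2 ≤ ‖y‖ₑ ^ 2 * ∫⁻ t, ‖fderiv ℝ u (x + t • y)‖ₑ ^ 2 ∂P := by
    calc ‖u (x + y) - u x‖ₑ ^ 2
        ≤ (‖y‖ₑ * ∫⁻ t, ‖fderiv ℝ u (x + t • y)‖ₑ ∂P) ^ 2 := by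
          gcongr; exact enorm_sub_le_mul_lintegral_enorm_fderiv hu x y
      _ ≤ ‖y‖ₑ ^ 2 * ∫⁻ t, ‖fderiv ℝ u (x + t • y)‖ₑ ^ 2 ∂P := by
          rw [mul_pow]
          gcongr
          refine sq_lintegral_le_lintegral_sq P (Measurable.aemeasurable ?_)
          exact ((hu.continuous_fderiv one_ne_zero).comp (by fun_prop)).enorm.measurable
  calc ∫⁻ x, ‖u (x + y) - u x‖ₑ ^ 2 ∂ρ
      ≤ ‖y‖ₑ ^ 2 * ∫⁻ x, ∫⁻ t, ‖fderiv ℝ u (x + t • y)‖ₑ ^ 2 ∂P ∂ρ := by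
        rw [← lintegral_const_mul' _ _ (pow_ne_top enorm_ne_top)]
        exact lintegral_mono hpt
    _ = ‖y‖ₑ ^ 2 * ∫⁻ t, ∫⁻ x, ‖fderiv ℝ u (x + t • y)‖ₑ ^ 2 ∂ρ ∂P := by
        rw [lintegral_lintegral_swap hmeas.aemeasurable]
    _ = ‖y‖ₑ ^ 2 * ∫⁻ x, ‖fderiv ℝ u x‖ₑ ^ 2 ∂ρ := by
        simp_rw [lintegral_add_right_eq_self (fun x => ‖fderiv ℝ u x‖ₑ ^ 2)]
        simp

end Gradient

lemma setLIntegral_ofReal_rpow_ne_top {s : Set ℝ} {p : ℝ}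
    (h : IntegrableOn (fun r : ℝ => r ^ p) s) : ∫⁻ r in s, ENNReal.ofReal (r ^ p) ≠ ⊤ :=
  (lintegral_ofReal_le_lintegral_enorm _).trans_lt h.2 |>.ne

lemma exists_lintegral_rpow_mul_min_le {α : ℝ} (hα0 : 0 < α) (hα2 : α < 2) :
    ∃ C ≠ ⊤, ∀ a b : ℝ≥0∞,
      ∫⁻ r in Ioi (0:ℝ), ENNReal.ofReal (r ^ (-1 - α)) * min a (ENNReal.ofReal r ^ 2 * b)
        ≤ C * (a + b) := by
  set A := ∫⁻ r in Ioc (0:ℝ) 1, ENNReal.ofReal (r ^ (1 - α))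
  set B := ∫⁻ r in Ioi (1:ℝ), ENNReal.ofReal (r ^ (-1 - α))
  have hA : A ≠ ⊤ := setLIntegral_ofReal_rpow_ne_top <| by
    rw [← intervalIntegrable_iff_integrableOn_Ioc_of_le zero_le_one]
    exact intervalIntegral.intervalIntegrable_rpow' (by linarith)
  have hB : B ≠ ⊤ :=
    setLIntegral_ofReal_rpow_ne_top (integrableOn_Ioi_rpow_of_lt (by linarith) one_pos)
  refine ⟨A + B, add_ne_top.2 ⟨hA, hB⟩, fun a b => ?_⟩
  have hnear : ∫⁻ r in Ioc (0:ℝ) 1,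
      ENNReal.ofReal (r ^ (-1 - α)) * min a (ENNReal.ofReal r ^ 2 * b) ≤ A * b := by
    rw [← lintegral_mul_const _ (by fun_prop)]
    refine setLIntegral_mono (by fun_prop) fun r hr => ?_
    calc ENNReal.ofReal (r ^ (-1 - α)) * min a (ENNReal.ofReal r ^ 2 * b)
        ≤ ENNReal.ofReal (r ^ (-1 - α)) * (ENNReal.ofReal r ^ 2 * b) := by
          gcongr; exact min_le_right _ _
      _ = ENNReal.ofReal (r ^ (1 - α)) * b := by
        rw [← mul_assoc, ← ENNReal.ofReal_pow hr.1.le,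
          ← ENNReal.ofReal_mul (Real.rpow_nonneg hr.1.le _), ← Real.rpow_natCast,
          ← Real.rpow_add hr.1]
        congr 3
        push_cast
        ring
  have hfar : ∫⁻ r in Ioi (1:ℝ),
      ENNReal.ofReal (r ^ (-1 - α)) * min a (ENNReal.ofReal r ^ 2 * b) ≤ B * a := by
    rw [← lintegral_mul_const _ (by fun_prop)]
    exact lintegral_mono fun r => by gcongr; exact min_le_left _ _
  calc _ = (∫⁻ r in Ioc (0:ℝ) 1,
          ENNReal.ofReal (r ^ (-1 - α)) * min a (ENNReal.ofReal r ^ 2 * b))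
        + ∫⁻ r in Ioi (1:ℝ),
          ENNReal.ofReal (r ^ (-1 - α)) * min a (ENNReal.ofReal r ^ 2 * b) := by
        rw [← Ioc_union_Ioi_eq_Ioi zero_le_one,
          lintegral_union measurableSet_Ioi (Ioc_disjoint_Ioi le_rfl)]
    _ ≤ A * b + B * a := add_le_add hnear hfar
    _ ≤ (A + B) * (a + b) := by
        rw [add_mul, mul_add, mul_add]
        exact add_le_add le_add_self le_self_add

instance {N : ℕ} (μ : Measure (sphere (0 : EuclideanSpace ℝ (Fin N)) 1)) [SFinite μ] (α : ℝ) :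
    SFinite (stableMeasure μ α) := by
  rw [stableMeasure]
  infer_instance

lemma lintegral_stableMeasure {N : ℕ} (μ : Measure (sphere (0 : EuclideanSpace ℝ (Fin N)) 1))
    [SFinite μ] (α : ℝ) {f : EuclideanSpace ℝ (Fin N) → ℝ≥0∞} (hf : Measurable f) :
    ∫⁻ y, f y ∂stableMeasure μ α
      = ∫⁻ θ, (∫⁻ r in Ioi (0:ℝ), ENNReal.ofReal (r ^ (-1 - α)) * f (r • (θ : _))) ∂μ := by
  rw [stableMeasure, lintegral_map hf (by fun_prop), lintegral_prod _ (by fun_prop)]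
  refine lintegral_congr fun θ => ?_
  exact lintegral_withDensity_eq_lintegral_mul _ (by fun_prop) (hf.comp (by fun_prop))

lemma exists_lintegral_stableMeasure_min_le {N : ℕ}
    (μ : Measure (sphere (0 : EuclideanSpace ℝ (Fin N)) 1)) [IsFiniteMeasure μ]
    {α : ℝ} (hα0 : 0 < α) (hα2 : α < 2) :
    ∃ C > 0, ∀ a b : ℝ≥0∞,
      ∫⁻ y, min a (‖y‖ₑ ^ 2 * b) ∂stableMeasure μ α ≤ ENNReal.ofReal C * (a + b) := by
  obtain ⟨K, hK, hradial⟩ := exists_lintegral_rpow_mul_min_le hα0 hα2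
  refine ⟨(μ univ * K).toReal + 1, by positivity, fun a b => ?_⟩
  have hsphere (θ : sphere (0 : EuclideanSpace ℝ (Fin N)) 1) {r : ℝ} (hr : r ∈ Ioi 0) :
      ‖r • (θ : EuclideanSpace ℝ (Fin N))‖ₑ = ENNReal.ofReal r := by
    rw [← ofReal_norm, norm_smul, norm_eq_of_mem_sphere, mul_one,
      Real.norm_of_nonneg (le_of_lt hr)]
  calc ∫⁻ y, min a (‖y‖ₑ ^ 2 * b) ∂stableMeasure μ α
      = ∫⁻ θ, (∫⁻ r in Ioi (0:ℝ),
          ENNReal.ofReal (r ^ (-1 - α)) * min a (ENNReal.ofReal r ^ 2 * b)) ∂μ := by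
        rw [lintegral_stableMeasure μ α (by fun_prop)]
        refine lintegral_congr fun θ => setLIntegral_congr_fun measurableSet_Ioi fun r hr => ?_
        rw [hsphere θ hr]
    _ ≤ ∫⁻ _, K * (a + b) ∂μ := lintegral_mono fun _ => hradial a b
    _ = μ univ * K * (a + b) := by rw [lintegral_const, mul_comm, mul_assoc]
    _ ≤ ENNReal.ofReal ((μ univ * K).toReal + 1) * (a + b) := by
        gcongr
        exact (ofReal_toReal (mul_ne_top (measure_ne_top μ univ) hK)).symm.trans_le
          (ofReal_le_ofReal (by linarith))

section Energy

variable {N : ℕ} (ν : Measure (EuclideanSpace ℝ (Fin N)))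

lemma Dnu_sq (u : EuclideanSpace ℝ (Fin N) → ℝ) (x : EuclideanSpace ℝ (Fin N)) :
    Dnu ν u x ^ 2 = 2⁻¹ * ∫⁻ y, ‖u x - u (x - y)‖ₑ ^ 2 ∂ν := by
  rw [Dnu, ← ENNReal.rpow_natCast, ← ENNReal.rpow_mul]
  norm_num
  rfl

variable [SFinite ν] {u : EuclideanSpace ℝ (Fin N) → ℝ}

lemma measurable_Dnu (hu : Continuous u) : Measurable (Dnu ν u) :=
  (ENNReal.continuous_rpow_const.measurable).comp
    ((Measurable.lintegral_prod_right' (f := fun p : EuclideanSpace ℝ (Fin N) × _ =>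
      ‖u p.1 - u (p.1 - p.2)‖ₑ ^ 2) (by fun_prop)).const_mul _)

lemma energy_le_two_mul_lintegral_min (hu : ContDiff ℝ 1 u) :
    energy ν u ≤ 2 * ∫⁻ y,
      min (eLpNorm u 2 volume ^ 2) (‖y‖ₑ ^ 2 * eLpNorm (fderiv ℝ u) 2 volume ^ 2) ∂ν := by
  have hc : Continuous u := hu.continuous
  rw [eLpNorm_two_sq_eq_lintegral, eLpNorm_two_sq_eq_lintegral]
  have hshift (y) : ∫⁻ x, ‖u x - u (x - y)‖ₑ ^ 2 = ∫⁻ x, ‖u (x + y) - u x‖ₑ ^ 2 := by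
    simpa using (lintegral_add_right_eq_self (fun x => ‖u x - u (x - y)‖ₑ ^ 2) y).symm
  have hmin (y) : ∫⁻ x, ‖u x - u (x - y)‖ₑ ^ 2
      ≤ 4 * min (∫⁻ x, ‖u x‖ₑ ^ 2) (‖y‖ₑ ^ 2 * ∫⁻ x, ‖fderiv ℝ u x‖ₑ ^ 2) := by
    rw [hshift, mul_min]
    refine le_min (lintegral_enorm_sub_comp_add_sq_le_four_mul hc y) ?_
    exact (lintegral_enorm_sub_comp_add_sq_le_fderiv hu y).trans
      (le_mul_of_one_le_left' (by norm_num))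
  calc energy ν u = 2⁻¹ * ∫⁻ y, (∫⁻ x, ‖u x - u (x - y)‖ₑ ^ 2) ∂ν := by
        simp_rw [energy, Dnu_sq]
        rw [lintegral_const_mul' _ _ (by simp), lintegral_lintegral_swap (by fun_prop)]
    _ ≤ 2⁻¹ * ∫⁻ y,
          4 * min (∫⁻ x, ‖u x‖ₑ ^ 2) (‖y‖ₑ ^ 2 * ∫⁻ x, ‖fderiv ℝ u x‖ₑ ^ 2) ∂ν := by
        gcongr 2⁻¹ * ?_
        exact lintegral_mono hmin
    _ = 2 * ∫⁻ y, min (∫⁻ x, ‖u x‖ₑ ^ 2) (‖y‖ₑ ^ 2 * ∫⁻ x, ‖fderiv ℝ u x‖ₑ ^ 2) ∂ν := by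
        rw [lintegral_const_mul' _ _ (by simp), ← mul_assoc,
          show (4 : ℝ≥0∞) = 2 * 2 by norm_num, ← mul_assoc,
          ENNReal.inv_mul_cancel two_ne_zero ofNat_ne_top, one_mul]

end Energy

theorem Dnu_mem_L2_general {N : ℕ} (α : ℝ) (hα0 : 0 < α) (hα2 : α < 2)
    (μ : Measure (sphere (0 : EuclideanSpace ℝ (Fin N)) 1)) [IsFiniteMeasure μ]
    (R : ℝ) :
    ∃ C > 0, ∀ u : EuclideanSpace ℝ (Fin N) → ℝ,
      ContDiff ℝ 2 u → HasCompactSupport u → tsupport u ⊆ Metric.closedBall 0 R →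
      MemLp (fun x => (Dnu (stableMeasure μ α) u x).toReal) 2 volume ∧
      eLpNorm (fun x => (Dnu (stableMeasure μ α) u x).toReal) 2 volume
        ≤ ENNReal.ofReal C *
          (eLpNorm u 2 volume ^ 2 + eLpNorm (fun x => fderiv ℝ u x) 2 volume ^ 2)
            ^ (1 / 2 : ℝ) := by
  obtain ⟨C, hC, hstable⟩ := exists_lintegral_stableMeasure_min_le μ hα0 hα2
  refine ⟨(2 * C) ^ (1 / 2 : ℝ), by positivity, fun u hu hcs _ => ?_⟩
  set S := eLpNorm u 2 volume ^ 2 + eLpNorm (fun x => fderiv ℝ u x) 2 volume ^ 2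
  have hS : S ≠ ⊤ := add_ne_top.2
    ⟨pow_ne_top (hu.continuous.memLp_of_hasCompactSupport hcs).eLpNorm_ne_top,
      pow_ne_top ((hu.continuous_fderiv two_ne_zero).memLp_of_hasCompactSupport
        (hcs.fderiv ℝ)).eLpNorm_ne_top⟩
  have henergy : energy (stableMeasure μ α) u ≤ ENNReal.ofReal (2 * C) * S :=
    calc energy (stableMeasure μ α) u
        ≤ 2 * ∫⁻ y, min (eLpNorm u 2 volume ^ 2)
            (‖y‖ₑ ^ 2 * eLpNorm (fderiv ℝ u) 2 volume ^ 2) ∂stableMeasure μ α :=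
          energy_le_two_mul_lintegral_min _ (hu.of_le one_le_two)
      _ ≤ 2 * (ENNReal.ofReal C * S) := by gcongr; exact hstable _ _
      _ = ENNReal.ofReal (2 * C) * S := by rw [ofReal_mul zero_le_two, ofReal_ofNat, mul_assoc]
  have hbound : eLpNorm (fun x => (Dnu (stableMeasure μ α) u x).toReal) 2 volume
      ≤ ENNReal.ofReal ((2 * C) ^ (1 / 2 : ℝ)) * S ^ (1 / 2 : ℝ) :=
    calc _ ≤ energy (stableMeasure μ α) u ^ (1 / 2 : ℝ) := eLpNorm_toReal_two_le _
      _ ≤ (ENNReal.ofReal (2 * C) * S) ^ (1 / 2 : ℝ) := by gcongr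
      _ = _ := by
          rw [mul_rpow_of_nonneg _ _ (by norm_num), ofReal_rpow_of_nonneg (by positivity)
            (by norm_num)]
  refine ⟨⟨(measurable_Dnu _ hu.continuous).ennreal_toReal.aestronglyMeasurable, ?_⟩, hbound⟩
  exact hbound.trans_lt (mul_lt_top ofReal_lt_top (rpow_lt_top_of_nonneg (by norm_num) hS))

theorem Dnu_mem_L2 {N : ℕ} (hN : 2 ≤ N) (α : ℝ) (hα0 : 0 < α) (hα2 : α < 2)
    (μ : Measure (sphere (0 : EuclideanSpace ℝ (Fin N)) 1)) [IsFiniteMeasure μ]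
    (R : ℝ) (hR : 0 < R) :
    ∃ C > 0, ∀ u : EuclideanSpace ℝ (Fin N) → ℝ,
      ContDiff ℝ 2 u → HasCompactSupport u → tsupport u ⊆ Metric.closedBall 0 R →
      MemLp (fun x => (Dnu (stableMeasure μ α) u x).toReal) 2 volume ∧
      eLpNorm (fun x => (Dnu (stableMeasure μ α) u x).toReal) 2 volume
        ≤ ENNReal.ofReal C *
          (eLpNorm u 2 volume ^ 2 + eLpNorm (fun x => fderiv ℝ u x) 2 volume ^ 2)
            ^ (1 / 2 : ℝ) :=
  Dnu_mem_L2_general α hα0 hα2 μ R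
end
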